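/- arXiv:2312.03470 — 2 statements merged into one kernel-verified Lean document; each statement's English description precedes it below -/
import Mathlib

section
/- Let n = 2k+1 be odd with n ≥ 5, fix c ∈ ℤ/nℤ, and let m be the unique element with 2m + c = 0. For a ∈ ℤ/nℤ, the number of unordered pairs {i,j} of distinct elements of ℤ/nℤ \ {m} with i + j + a = 0 equals k if a = c, and equals k - 1 if a ≠ c. -/
/-- For odd `n = 2k+1 ≥ 5`, `c ∈ ℤ/nℤ`, and `m` the unique element with `2m + c = 0`:
for `a ∈ ℤ/nℤ`, the number of unordered pairs `{i,j}` of distinct elements of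
`ℤ/nℤ \ {m}` with `i + j + a = 0` is `k` if `a = c` and `k - 1` otherwise. -/
theorem stmt2 (k : ℕ) (hk : 2 ≤ k) (c m : ZMod (2 * k + 1)) (hm : 2 * m + c = 0)
    (a : ZMod (2 * k + 1)) :
    (a = c →
      (Finset.univ.filter (fun s : Finset (ZMod (2 * k + 1)) =>
        s.card = 2 ∧ s ⊆ Finset.univ \ {m} ∧ s.sum id + a = 0)).card = k) ∧
    (a ≠ c →
      (Finset.univ.filter (fun s : Finset (ZMod (2 * k + 1)) =>
        s.card = 2 ∧ s ⊆ Finset.univ \ {m} ∧ s.sum id + a = 0)).card = k - 1) := by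
  haveI : NeZero (2 * k + 1) := ⟨by omega⟩
  have h2 : (2 : ZMod (2 * k + 1)) * ((k : ZMod (2 * k + 1)) + 1) = 1 := by
    have h := ZMod.natCast_self (2 * k + 1)
    push_cast at h
    linear_combination h
  have hcan : ∀ x y : ZMod (2 * k + 1), 2 * x = 2 * y → x = y := by
    intro x y h
    calc x = ((k : ZMod (2 * k + 1)) + 1) * (2 * x) := by
            rw [← mul_assoc, mul_comm ((k : ZMod (2 * k + 1)) + 1) 2, h2, one_mul]
      _ = ((k : ZMod (2 * k + 1)) + 1) * (2 * y) := by rw [h]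
      _ = y := by rw [← mul_assoc, mul_comm ((k : ZMod (2 * k + 1)) + 1) 2, h2, one_mul]
  set S := Finset.univ.filter (fun s : Finset (ZMod (2 * k + 1)) =>
      s.card = 2 ∧ s ⊆ Finset.univ \ {m} ∧ s.sum id + a = 0) with hSdef
  have hmemS : ∀ s : Finset (ZMod (2 * k + 1)),
      s ∈ S ↔ ∃ i, i ≠ -a - i ∧ i ≠ m ∧ -a - i ≠ m ∧ s = {i, -a - i} := by
    intro s
    rw [hSdef, Finset.mem_filter]
    simp only [Finset.mem_univ, true_and]
    constructor
    · rintro ⟨hc2, hsub, hsum⟩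
      obtain ⟨x, y, hxy, rfl⟩ := Finset.card_eq_two.mp hc2
      have hy : y = -a - x := by
        rw [Finset.sum_pair hxy] at hsum
        simp only [id] at hsum
        linear_combination hsum
      subst hy
      have hxm : x ≠ m := by
        have := hsub (Finset.mem_insert_self x _)
        simp only [Finset.mem_sdiff, Finset.mem_singleton] at this
        exact this.2
      have hym : -a - x ≠ m := by
        have := hsub (by simp : -a - x ∈ ({x, -a - x} : Finset _))
        simp only [Finset.mem_sdiff, Finset.mem_singleton] at this
        exact this.2
      exact ⟨x, hxy, hxm, hym, rfl⟩
    · rintro ⟨i, h1, h2m, h3, rfl⟩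
      refine ⟨Finset.card_pair h1, ?_, ?_⟩
      · intro x hx
        simp only [Finset.mem_insert, Finset.mem_singleton] at hx
        simp only [Finset.mem_sdiff, Finset.mem_univ, Finset.mem_singleton, true_and]
        rcases hx with rfl | rfl
        · exact h2m
        · exact h3
      · rw [Finset.sum_pair h1]
        simp only [id]
        ring
  have hkey : ∀ s ∈ S, ∀ i ∈ s, s = {i, -a - i} := by
    intro s hs i hi
    obtain ⟨j, h1, h2m, h3, rfl⟩ := (hmemS _).mp hs
    rcases Finset.mem_insert.mp hi with rfl | hi'
    · rfl
    · rw [Finset.mem_singleton] at hi'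
      subst hi'
      rw [show -a - (-a - j) = j by ring, Finset.pair_comm]
  have hdisj : ∀ x ∈ S, ∀ y ∈ S, x ≠ y → Disjoint (id x) (id y) := by
    intro x hx y hy hne
    by_contra hnd
    obtain ⟨i, hix, hiy⟩ := Finset.not_disjoint_iff.mp hnd
    exact hne ((hkey x hx i hix).trans (hkey y hy i hiy).symm)
  have hcardB : (S.biUnion id).card = 2 * S.card := by
    rw [Finset.card_biUnion hdisj]
    have hc : ∀ s ∈ S, (id s : Finset (ZMod (2 * k + 1))).card = 2 := by
      intro s hs
      exact (Finset.mem_filter.mp hs).2.1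
    rw [Finset.sum_congr rfl hc, Finset.sum_const, smul_eq_mul, mul_comm]
  have hBmem : ∀ i, i ∈ S.biUnion id ↔ (i ≠ -a - i ∧ i ≠ m ∧ -a - i ≠ m) := by
    intro i
    rw [Finset.mem_biUnion]
    constructor
    · rintro ⟨s, hs, hi⟩
      obtain ⟨j, h1, h2m, h3, rfl⟩ := (hmemS _).mp hs
      rcases Finset.mem_insert.mp hi with rfl | hi'
      · exact ⟨h1, h2m, h3⟩
      · rw [Finset.mem_singleton] at hi'
        subst hi'
        refine ⟨?_, h3, ?_⟩
        · rw [show -a - (-a - j) = j by ring]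
          exact fun h => h1 h.symm
        · rw [show -a - (-a - j) = j by ring]
          exact h2m
    · rintro ⟨h1, h2m, h3⟩
      exact ⟨{i, -a - i}, (hmemS _).mpr ⟨i, h1, h2m, h3, rfl⟩, Finset.mem_insert_self _ _⟩
  have hunivcard : (Finset.univ : Finset (ZMod (2 * k + 1))).card = 2 * k + 1 := by
    rw [Finset.card_univ, ZMod.card]
  constructor
  · intro ha
    subst ha
    have hBeq : S.biUnion id = Finset.univ \ {m} := by
      ext i
      rw [hBmem]
      simp only [Finset.mem_sdiff, Finset.mem_univ, Finset.mem_singleton, true_and]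
      constructor
      · exact fun h => h.2.1
      · intro him
        refine ⟨?_, him, ?_⟩
        · intro h
          exact him (hcan i m (by linear_combination h - hm))
        · intro h
          exact him (by linear_combination -h - hm)
    rw [hBeq, Finset.card_sdiff_of_subset (Finset.subset_univ _), hunivcard,
      Finset.card_singleton] at hcardB
    omega
  · intro hne
    set i0 := ((k : ZMod (2 * k + 1)) + 1) * (-a) with hi0def
    have hi0 : 2 * i0 = -a := by rw [hi0def, ← mul_assoc, h2, one_mul]
    have hd1 : i0 ≠ m := by
      intro h
      exact hne (by linear_combination hi0 - hm - 2 * h)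
    have hd2 : m ≠ -a - m := by
      intro h
      exact hne (by linear_combination h - hm)
    have hd3 : i0 ≠ -a - m := by
      intro h
      exact hd1 (hcan i0 m (by linear_combination 2 * hi0 - 2 * h))
    have hBeq : S.biUnion id = Finset.univ \ {i0, m, -a - m} := by
      ext i
      rw [hBmem]
      simp only [Finset.mem_sdiff, Finset.mem_univ, Finset.mem_insert,
        Finset.mem_singleton, true_and, not_or]
      constructor
      · rintro ⟨h1, h2m, h3⟩
        refine ⟨?_, h2m, ?_⟩
        · rintro rfl
          exact h1 (by linear_combination hi0)
        · rintro rfl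
          exact h3 (by ring)
      · rintro ⟨hne0, h2m, h3⟩
        refine ⟨?_, h2m, ?_⟩
        · intro h
          exact hne0 (hcan i i0 (by linear_combination h - hi0))
        · intro h
          exact h3 (by linear_combination -h)
    have htriple : ({i0, m, -a - m} : Finset (ZMod (2 * k + 1))).card = 3 :=
      Finset.card_eq_three.mpr ⟨i0, m, -a - m, hd1, hd3, hd2, rfl⟩
    rw [hBeq, Finset.card_sdiff_of_subset (Finset.subset_univ _), hunivcard, htriple] at hcardB
    omega
end

section
/- Let n ≥ 7 and consider the matroid M_n with ground set ℤ/nℤ ⊔ ℤ/nℤ' and non-bases the triples {i, j; r} with i, j distinct in the first copy, r in the second copy, and i + j + r = 0. Then every permutation of the ground set of the form (i ↦ a·i + b on the first copy, r ↦ a·r - 2b on the second copy), for a ∈ (ℤ/nℤ)^* and b ∈ ℤ/nℤ, is an automorphism of M_n, and these form a subgroup of Aut(M_n) isomorphic to ℤ/nℤ ⋊ (ℤ/nℤ)^*. -/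
namespace Stmt15

variable {n : ℕ}

def F (a b : ZMod n) : ZMod n ⊕ ZMod n → ZMod n ⊕ ZMod n :=
  Sum.map (fun i => a * i + b) (fun r => a * r - 2 * b)

lemma F_comp (a b a' b' : ZMod n) (x : ZMod n ⊕ ZMod n) :
    F a b (F a' b' x) = F (a * a') (a * b' + b) x := by
  cases x <;> simp [F] <;> ring

def mulUnit (a : (ZMod n)ˣ) : ZMod n ≃ₗ[ZMod n] ZMod n where
  toFun x := (a : ZMod n) * x
  invFun y := ((a⁻¹ : (ZMod n)ˣ) : ZMod n) * y
  map_add' x y := mul_add _ _ _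
  map_smul' c x := by simp [smul_eq_mul]; ring
  left_inv x := by simp [← mul_assoc, ← Units.val_mul]
  right_inv y := by simp [← mul_assoc, ← Units.val_mul]

def affE (a : (ZMod n)ˣ) (b : ZMod n) : ZMod n ≃ᵃ[ZMod n] ZMod n where
  toEquiv :=
    { toFun := fun x => (a : ZMod n) * x + b
      invFun := fun y => ((a⁻¹ : (ZMod n)ˣ) : ZMod n) * (y - b)
      left_inv := fun x => by
        simp [← mul_assoc, ← Units.val_mul]
      right_inv := fun y => by
        simp [← mul_assoc, ← Units.val_mul] }
  linear := mulUnit a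
  map_vadd' p v := by
    show (a : ZMod n) * (v + p) + b = (a : ZMod n) * v + ((a : ZMod n) * p + b)
    ring

@[simp] lemma affE_apply (a : (ZMod n)ˣ) (b : ZMod n) (x : ZMod n) :
    affE a b x = (a : ZMod n) * x + b := rfl

lemma rep (f : ZMod n ≃ᵃ[ZMod n] ZMod n) (x : ZMod n) :
    f x = f.linear 1 * x + f 0 := by
  have h : f (x +ᵥ (0 : ZMod n)) = f.linear x +ᵥ f 0 := f.map_vadd 0 x
  simp only [vadd_eq_add, add_zero] at h
  rw [h, show f.linear x = f.linear 1 * x by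
    rw [show x = x • (1 : ZMod n) by simp, map_smul]; simp [smul_eq_mul, mul_comm]]

noncomputable def Φ : (ZMod n ≃ᵃ[ZMod n] ZMod n) →* Equiv.Perm (ZMod n ⊕ ZMod n) :=
  MonoidHom.mk'
    (fun f => Equiv.sumCongr f.toEquiv (f.toEquiv.trans (Equiv.subRight (3 * f 0))))
    (by
      intro f g
      ext x
      cases x with
      | inl i =>
        simp [Equiv.Perm.mul_apply, AffineEquiv.coe_mul]
      | inr r =>
        simp only [Equiv.Perm.mul_apply, Equiv.sumCongr_apply, Sum.map_inr,
          Equiv.coe_trans, Function.comp_apply, Equiv.subRight_apply,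
          AffineEquiv.coe_mul, AffineEquiv.coe_toEquiv]
        show Sum.inr ((f (g r)) - 3 * (f (g 0))) =
          Sum.inr (f (g r - 3 * g 0) - 3 * f 0)
        rw [rep f, rep f (g r - 3 * g 0), rep f (g 0), rep g, rep g 0]
        ring_nf)

lemma Φ_apply_inl (f : ZMod n ≃ᵃ[ZMod n] ZMod n) (i : ZMod n) :
    Φ f (Sum.inl i) = Sum.inl (f i) := rfl

lemma Φ_apply_inr (f : ZMod n ≃ᵃ[ZMod n] ZMod n) (r : ZMod n) :
    Φ f (Sum.inr r) = Sum.inr (f r - 3 * f 0) := rfl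

lemma Φ_inj : Function.Injective (Φ (n := n)) := by
  intro f g h
  apply AffineEquiv.ext
  intro x
  have := congrArg (fun σ : Equiv.Perm (ZMod n ⊕ ZMod n) => σ (Sum.inl x)) h
  simpa [Φ_apply_inl] using this

lemma linear_symm_mul (f : ZMod n ≃ᵃ[ZMod n] ZMod n) :
    f.linear.symm 1 * f.linear 1 = 1 := by
  have h : f.linear (f.linear.symm 1 • (1 : ZMod n)) = f.linear.symm 1 • f.linear 1 :=
    map_smul _ _ _
  rw [smul_eq_mul, mul_one, smul_eq_mul] at h
  rw [← h, f.linear.apply_symm_apply]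

def unitOf (f : ZMod n ≃ᵃ[ZMod n] ZMod n) : (ZMod n)ˣ :=
  ⟨f.linear 1, f.linear.symm 1, by rw [mul_comm]; exact linear_symm_mul f,
    linear_symm_mul f⟩

@[simp] lemma unitOf_val (f : ZMod n ≃ᵃ[ZMod n] ZMod n) :
    (unitOf f : ZMod n) = f.linear 1 := rfl

end Stmt15

open Stmt15 in
/-- For `n ≥ 7`, the affine maps `(i ↦ ai+b, r ↦ ar-2b)` (for `a ∈ (ℤ/nℤ)ˣ`,
`b ∈ ℤ/nℤ`) on the ground set `ℤ/nℤ ⊔ ℤ/nℤ'` of the matroid `M_n` are bijections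
preserving the set of non-bases `{i,j;r}` (`i ≠ j`, `i+j+r = 0`), and they form a
subgroup of permutations isomorphic to the affine group `ℤ/nℤ ⋊ (ℤ/nℤ)ˣ` of
invertible affine transformations of `ℤ/nℤ`. -/
theorem stmt15 (n : ℕ) (hn : 7 ≤ n) :
    let NB : Set (Finset (ZMod n ⊕ ZMod n)) :=
      {s | ∃ i j r : ZMod n, i ≠ j ∧ i + j + r = 0 ∧
        s = {Sum.inl i, Sum.inl j, Sum.inr r}}
    (∀ (a : (ZMod n)ˣ) (b : ZMod n),
      Function.Bijective
        (Sum.map (fun i => (a : ZMod n) * i + b)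
          (fun r => (a : ZMod n) * r - 2 * b) : ZMod n ⊕ ZMod n → ZMod n ⊕ ZMod n) ∧
      ∀ s : Finset (ZMod n ⊕ ZMod n),
        s ∈ NB ↔ s.image (Sum.map (fun i => (a : ZMod n) * i + b)
          (fun r => (a : ZMod n) * r - 2 * b)) ∈ NB) ∧
    ∃ H : Subgroup (Equiv.Perm (ZMod n ⊕ ZMod n)),
      (H : Set (Equiv.Perm (ZMod n ⊕ ZMod n))) =
        {σ | ∃ (a : (ZMod n)ˣ) (b : ZMod n), ∀ x,
          σ x = Sum.map (fun i => (a : ZMod n) * i + b)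
            (fun r => (a : ZMod n) * r - 2 * b) x} ∧
      Nonempty (H ≃* (ZMod n ≃ᵃ[ZMod n] ZMod n)) := by
  intro NB
  -- key forward lemma
  have key : ∀ (a : (ZMod n)ˣ) (b : ZMod n) (s : Finset (ZMod n ⊕ ZMod n)),
      s ∈ NB → s.image (F (a : ZMod n) b) ∈ NB := by
    rintro a b s ⟨i, j, r, hij, hsum, rfl⟩
    refine ⟨(a : ZMod n) * i + b, (a : ZMod n) * j + b, (a : ZMod n) * r - 2 * b, ?_, ?_, ?_⟩
    · intro h
      apply hij
      have h2 : (a : ZMod n) * i = (a : ZMod n) * j := by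
        have := add_right_cancel h
        exact this
      calc i = ((a⁻¹ : (ZMod n)ˣ) : ZMod n) * ((a : ZMod n) * i) := by
              rw [← mul_assoc, ← Units.val_mul]; simp
        _ = ((a⁻¹ : (ZMod n)ˣ) : ZMod n) * ((a : ZMod n) * j) := by rw [h2]
        _ = j := by rw [← mul_assoc, ← Units.val_mul]; simp
    · linear_combination (a : ZMod n) * hsum
    · simp [F, Finset.image_insert]
  have Finv : ∀ (a : (ZMod n)ˣ) (b : ZMod n) (x : ZMod n ⊕ ZMod n),
      F ((a⁻¹ : (ZMod n)ˣ) : ZMod n) (-(((a⁻¹ : (ZMod n)ˣ) : ZMod n) * b))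
        (F (a : ZMod n) b x) = x := by
    intro a b x
    rw [F_comp]
    have h1 : ((a⁻¹ : (ZMod n)ˣ) : ZMod n) * (a : ZMod n) = 1 := by
      rw [← Units.val_mul]; simp
    rw [show ((a⁻¹ : (ZMod n)ˣ) : ZMod n) * b + -(((a⁻¹ : (ZMod n)ˣ) : ZMod n) * b) = 0 by ring,
      h1]
    cases x <;> simp [F]
  constructor
  · intro a b
    constructor
    · have : Function.Bijective (F (a : ZMod n) b) := by
        refine Function.bijective_iff_has_inverse.2
          ⟨F ((a⁻¹ : (ZMod n)ˣ) : ZMod n) (-(((a⁻¹ : (ZMod n)ˣ) : ZMod n) * b)), ?_, ?_⟩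
        · intro x; exact Finv a b x
        · intro x
          have := Finv a⁻¹ (-(((a⁻¹ : (ZMod n)ˣ) : ZMod n) * b)) x
          simpa using this
      exact this
    · intro s
      constructor
      · exact key a b s
      · intro h
        have h2 := key a⁻¹ (-(((a⁻¹ : (ZMod n)ˣ) : ZMod n) * b)) _ h
        rwa [Finset.image_image, show
          (F ((a⁻¹ : (ZMod n)ˣ) : ZMod n) (-(((a⁻¹ : (ZMod n)ˣ) : ZMod n) * b)) ∘
            Sum.map (fun i => (a : ZMod n) * i + b) (fun r => (a : ZMod n) * r - 2 * b)) = id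
          from funext fun x => Finv a b x, Finset.image_id] at h2
  · refine ⟨(Φ (n := n)).range, ?_, ?_⟩
    · ext σ
      simp only [MonoidHom.coe_range, Set.mem_range, Set.mem_setOf_eq]
      constructor
      · rintro ⟨f, rfl⟩
        refine ⟨unitOf f, f 0, ?_⟩
        intro x
        cases x with
        | inl i => simp [Φ_apply_inl, rep f i]
        | inr r =>
          simp only [Φ_apply_inr, Sum.map_inr, unitOf_val]
          rw [rep f r]
          congr 1
          ring
      · rintro ⟨a, b, h⟩
        refine ⟨affE a b, ?_⟩
        ext x
        rw [h x]
        cases x with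
        | inl i => simp [Φ_apply_inl]
        | inr r =>
          simp only [Φ_apply_inr, Sum.map_inr, affE_apply]
          congr 1
          ring
    · exact ⟨(MonoidHom.ofInjective Φ_inj).symm⟩
end
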